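/- arXiv:2602.20151 — 6 statements merged into one kernel-verified Lean document; each statement's English description precedes it below -/
import Mathlib

section
/- Let $\ell(z;\theta)\in[0,1]$ be nonincreasing in $\theta\in\mathbb{R}$ for every $z$, fix $\alpha\in(0,1]$, and define for a finite dataset $D$ the algorithms $\mathcal{A}(D)=\inf\{\theta: \frac{1}{|D|+1}\sum_{z\in D}\ell(z;\theta)\le\alpha-\frac{1}{|D|+1}\}$ and $\mathcal{A}^*(D)=\inf\{\theta:\frac{1}{|D|}\sum_{z\in D}\ell(z;\theta)\le\alpha\}$. Then for any dataset $D_{1:n+1}=(z_1,\ldots,z_{n+1})$ and every $i\in[n+1]$, one has $\mathcal{A}(D_{-i})\ge\mathcal{A}^*(D_{1:n+1})$, and consequently $\sum_{i=1}^{n+1}\ell(z_i;\mathcal{A}(D_{-i}))\le\sum_{i=1}^{n+1}\ell(z_i;\mathcal{A}^*(D_{1:n+1}))$ (i.e., $\mathcal{A}$ is $0$-stable with respect to $\mathcal{A}^*$). -/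
/-- **Conformal risk control is 0-stable for monotone losses** (Proposition 1).
For losses in `[0,1]`, nonincreasing and right-continuous in `θ`, the conservative
leftmost root computed on the leave-one-out dataset is at least the leftmost root
computed on the full dataset, and hence the total leave-one-out loss is bounded by
the total full-data loss. -/
theorem crc_zero_stable
    {𝒵 : Type*} (n : ℕ) (z : Fin (n + 1) → 𝒵)
    (ℓ : 𝒵 → ℝ → ℝ) (α : ℝ) (hα0 : 0 < α) (hα1 : α ≤ 1)
    (hℓ : ∀ w θ, ℓ w θ ∈ Set.Icc (0 : ℝ) 1)
    (hmono : ∀ w, Antitone (ℓ w))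
    -- right-continuity, so the infima are attained
    (hrc : ∀ w θ, ContinuousWithinAt (ℓ w) (Set.Ici θ) θ)
    -- nonemptiness and boundedness below of the constraint sets
    (hneA : ∀ i : Fin (n + 1),
      {θ : ℝ | (1 / (n + 1 : ℝ)) * ∑ j ∈ Finset.univ.erase i, ℓ (z j) θ
        ≤ α - 1 / (n + 1 : ℝ)}.Nonempty)
    (hbddA : ∀ i : Fin (n + 1),
      BddBelow {θ : ℝ | (1 / (n + 1 : ℝ)) * ∑ j ∈ Finset.univ.erase i, ℓ (z j) θ
        ≤ α - 1 / (n + 1 : ℝ)})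
    (hneS : {θ : ℝ | (1 / (n + 1 : ℝ)) * ∑ j : Fin (n + 1), ℓ (z j) θ ≤ α}.Nonempty)
    (hbddS : BddBelow {θ : ℝ | (1 / (n + 1 : ℝ)) * ∑ j : Fin (n + 1), ℓ (z j) θ ≤ α}) :
    (∀ i : Fin (n + 1),
      sInf {θ : ℝ | (1 / (n + 1 : ℝ)) * ∑ j : Fin (n + 1), ℓ (z j) θ ≤ α}
        ≤ sInf {θ : ℝ | (1 / (n + 1 : ℝ)) * ∑ j ∈ Finset.univ.erase i, ℓ (z j) θ
            ≤ α - 1 / (n + 1 : ℝ)})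
    ∧ (∑ i : Fin (n + 1),
        ℓ (z i) (sInf {θ : ℝ | (1 / (n + 1 : ℝ)) * ∑ j ∈ Finset.univ.erase i, ℓ (z j) θ
          ≤ α - 1 / (n + 1 : ℝ)}))
      ≤ ∑ i : Fin (n + 1),
          ℓ (z i) (sInf {θ : ℝ | (1 / (n + 1 : ℝ)) * ∑ j : Fin (n + 1), ℓ (z j) θ ≤ α}) := by
  have hpos : (0 : ℝ) < (n + 1 : ℝ) := by positivity
  have hsub : ∀ i : Fin (n + 1),
      {θ : ℝ | (1 / (n + 1 : ℝ)) * ∑ j ∈ Finset.univ.erase i, ℓ (z j) θ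
        ≤ α - 1 / (n + 1 : ℝ)}
      ⊆ {θ : ℝ | (1 / (n + 1 : ℝ)) * ∑ j : Fin (n + 1), ℓ (z j) θ ≤ α} := by
    intro i θ hθ
    simp only [Set.mem_setOf_eq] at *
    have hsplit : ∑ j : Fin (n + 1), ℓ (z j) θ
        = ℓ (z i) θ + ∑ j ∈ Finset.univ.erase i, ℓ (z j) θ :=
      (Finset.add_sum_erase _ _ (Finset.mem_univ i)).symm
    have h1 : ℓ (z i) θ ≤ 1 := (hℓ (z i) θ).2
    have : (1 / (n + 1 : ℝ)) * ∑ j : Fin (n + 1), ℓ (z j) θ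
        = (1 / (n + 1 : ℝ)) * ℓ (z i) θ
          + (1 / (n + 1 : ℝ)) * ∑ j ∈ Finset.univ.erase i, ℓ (z j) θ := by
      rw [hsplit]; ring
    rw [this]
    have h2 : (1 / (n + 1 : ℝ)) * ℓ (z i) θ ≤ 1 / (n + 1 : ℝ) := by
      nlinarith [one_div_pos.mpr hpos]
    linarith
  have hle : ∀ i : Fin (n + 1),
      sInf {θ : ℝ | (1 / (n + 1 : ℝ)) * ∑ j : Fin (n + 1), ℓ (z j) θ ≤ α}
        ≤ sInf {θ : ℝ | (1 / (n + 1 : ℝ)) * ∑ j ∈ Finset.univ.erase i, ℓ (z j) θ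
            ≤ α - 1 / (n + 1 : ℝ)} :=
    fun i => csInf_le_csInf hbddS (hneA i) (hsub i)
  exact ⟨hle, Finset.sum_le_sum fun i _ => hmono (z i) (hle i)⟩
end

section
/- Let $\ell(z;\theta)\in[0,1]$ be nonincreasing and right-continuous in $\theta$, with $\lim_{\theta\to\infty}\ell(z;\theta)=0$ for every $z$, let $\alpha\in(\frac{1}{n+1},1]$, let $(Z_1,\ldots,Z_{n+1})$ be exchangeable, and define $\hat\theta = \inf\{\theta: \frac{1}{n+1}\sum_{i=1}^{n}\ell(Z_i;\theta)\le\alpha-\frac{1}{n+1}\}$. Then $\mathbb{E}[\ell(Z_{n+1};\hat\theta)]\le\alpha$. -/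
/-!
Put `c = (n + 1) α - 1` and, for a configuration `v` of all `n + 1` points, let `θⱼ(v)` be the
threshold computed like `θ̂` but leaving out point `j` instead of the test point. Their minimum
`θ*` is a symmetric function of `v` with `θ* ≤ θ̂`, so by monotonicity the test loss at `θ̂` is at
most the test loss at `θ*`. Right-continuity puts each infimum `θⱼ` inside its own sublevel set;
at a minimising index `j` the other `n` losses at `θ*` therefore sum to at most `c`, and the
`j`-th loss is at most `1`, so the total loss at `θ*` is at most `(n + 1) α`. By exchangeability
and the symmetry of `θ*`, all `n + 1` points have the same expected loss at `θ*`, which is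
therefore at most `α`.
-/

open MeasureTheory Filter Set

namespace Antitone

variable {f : ℝ → ℝ} {c : ℝ}

theorem apply_sInf_setOf_le (hf : Antitone f) (hrc : ∀ θ, ContinuousWithinAt f (Ici θ) θ)
    (hne : ∃ θ, f θ ≤ c) : f (sInf {θ | f θ ≤ c}) ≤ c := by
  by_cases hb : BddBelow {θ | f θ ≤ c}
  · have hmem : ∀ θ, sInf {θ | f θ ≤ c} < θ → f θ ≤ c := fun θ hθ => by
      obtain ⟨x, hx, hxθ⟩ := (csInf_lt_iff hb hne).mp hθ
      exact (hf hxθ.le).trans hx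
    refine _root_.le_of_tendsto ((hrc _).mono_left (nhdsWithin_mono _ Ioi_subset_Ici_self)) ?_
    filter_upwards [self_mem_nhdsWithin] with θ hθ using hmem θ hθ
  · rw [Real.sInf_of_not_bddBelow hb]
    obtain ⟨x, hx, hx0⟩ := not_bddBelow_iff.mp hb 0
    exact (hf hx0.le).trans hx

theorem bddBelow_setOf_le_iff (hf : Antitone f) :
    BddBelow {θ | f θ ≤ c} ↔ ∃ q : ℤ, c < f q := by
  constructor
  · rintro ⟨b, hb⟩
    obtain ⟨q, hqb⟩ := exists_int_lt b
    exact ⟨q, not_le.mp fun hq => (hb hq).not_gt hqb⟩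
  · rintro ⟨q, hq⟩
    exact ⟨q, fun θ hθ => le_of_not_gt fun hθq => (hf hθq.le).not_gt (hθ.trans_lt hq)⟩

/-- The second conjunct accounts for the junk value `sInf = 0` of a set unbounded below. -/
theorem sInf_setOf_le_le_iff (hf : Antitone f) (hrc : ∀ θ, ContinuousWithinAt f (Ici θ) θ)
    (hne : ∃ θ, f θ ≤ c) (t : ℝ) :
    sInf {θ | f θ ≤ c} ≤ t ↔ f t ≤ c ∧ (0 ≤ t ∨ BddBelow {θ | f θ ≤ c}) := by
  by_cases hb : BddBelow {θ | f θ ≤ c}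
  · simp only [hb, or_true, and_true]
    exact ⟨fun h => (hf h).trans (hf.apply_sInf_setOf_le hrc hne), fun h => csInf_le hb h⟩
  · obtain ⟨x, hx, hxt⟩ := not_bddBelow_iff.mp hb t
    simp only [Real.sInf_of_not_bddBelow hb, hb, or_false, iff_and_self]
    exact fun _ => (hf hxt.le).trans hx

end Antitone

theorem measurable_sInf_setOf_le {X : Type*} [MeasurableSpace X] {g : X → ℝ → ℝ} {c : ℝ}
    (hg : ∀ θ, Measurable (g · θ)) (hanti : ∀ x, Antitone (g x))
    (hrc : ∀ x θ, ContinuousWithinAt (g x) (Ici θ) θ) (hne : ∀ x, ∃ θ, g x θ ≤ c) :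
    Measurable fun x => sInf {θ | g x θ ≤ c} := by
  refine measurable_of_Iic fun t => ?_
  have hpre : (fun x => sInf {θ | g x θ ≤ c}) ⁻¹' Iic t =
      {x | g x t ≤ c} ∩ ({_x | 0 ≤ t} ∪ ⋃ q : ℤ, {x | c < g x q}) := by
    ext x
    simp only [mem_preimage, mem_Iic, (hanti x).sInf_setOf_le_le_iff (hrc x) (hne x),
      (hanti x).bddBelow_setOf_le_iff, mem_inter_iff, mem_union, mem_iUnion, mem_ofPred_eq]
  rw [hpre]
  exact (measurableSet_le (hg t) measurable_const).inter ((MeasurableSet.const _).union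
    (.iUnion fun q => measurableSet_lt measurable_const (hg q)))

section Exchangeable

variable {Ω 𝒵 ι : Type*} [MeasurableSpace Ω] [MeasurableSpace 𝒵] {μ : Measure Ω}
  {Z : ι → Ω → 𝒵}

def Exchangeable (μ : Measure Ω) (Z : ι → Ω → 𝒵) : Prop :=
  ∀ σ : Equiv.Perm ι, μ.map (fun ω i => Z (σ i) ω) = μ.map (fun ω i => Z i ω)

theorem Exchangeable.integral_comp_perm (h : Exchangeable μ Z) (hZ : ∀ i, Measurable (Z i))
    {F : (ι → 𝒵) → ℝ} (hF : Measurable F) (σ : Equiv.Perm ι) :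
    ∫ ω, F (fun i => Z (σ i) ω) ∂μ = ∫ ω, F (fun i => Z i ω) ∂μ := by
  rw [← integral_map (measurable_pi_lambda _ fun i => hZ (σ i)).aemeasurable
    hF.aestronglyMeasurable, h σ, integral_map (measurable_pi_lambda _ hZ).aemeasurable
    hF.aestronglyMeasurable]

variable [DecidableEq ι] {G : 𝒵 → (ι → 𝒵) → ℝ}

theorem Exchangeable.integral_apply_eq (h : Exchangeable μ Z) (hZ : ∀ i, Measurable (Z i))
    (hG : Measurable fun p : 𝒵 × (ι → 𝒵) => G p.1 p.2)
    (hsymm : ∀ w v (σ : Equiv.Perm ι), G w (v ∘ σ) = G w v) (j k : ι) :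
    ∫ ω, G (Z j ω) (fun i => Z i ω) ∂μ = ∫ ω, G (Z k ω) (fun i => Z i ω) ∂μ := by
  have hF : Measurable fun v : ι → 𝒵 => G (v k) v :=
    hG.comp (f := fun v : ι → 𝒵 => (v k, v)) ((measurable_pi_apply k).prodMk measurable_id)
  refine Eq.trans (integral_congr_ae (ae_of_all _ fun ω => ?_))
    (h.integral_comp_perm hZ hF (Equiv.swap j k))
  dsimp only
  rw [Equiv.swap_apply_right]
  exact (hsymm _ (fun i => Z i ω) _).symm

theorem Exchangeable.integral_le_of_sum_le [Fintype ι] [IsProbabilityMeasure μ]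
    (h : Exchangeable μ Z) (hZ : ∀ i, Measurable (Z i))
    (hG : Measurable fun p : 𝒵 × (ι → 𝒵) => G p.1 p.2)
    (hsymm : ∀ w v (σ : Equiv.Perm ι), G w (v ∘ σ) = G w v)
    (hint : ∀ j, Integrable (fun ω => G (Z j ω) (fun i => Z i ω)) μ) {B : ℝ}
    (hB : ∀ v, ∑ j, G (v j) v ≤ B) (k : ι) :
    ∫ ω, G (Z k ω) (fun i => Z i ω) ∂μ ≤ B / Fintype.card ι := by
  have hsum : Fintype.card ι * ∫ ω, G (Z k ω) (fun i => Z i ω) ∂μ =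
      ∫ ω, ∑ j, G (Z j ω) (fun i => Z i ω) ∂μ := by
    simp [integral_finsetSum _ fun j _ => hint j, h.integral_apply_eq hZ hG hsymm _ k]
  rw [le_div_iff₀' (mod_cast Fintype.card_pos_iff.mpr ⟨k⟩), hsum]
  simpa using integral_mono (integrable_finsetSum _ fun j _ => hint j) (integrable_const B)
    fun ω => hB _

end Exchangeable

section LeaveOneOut

variable {ι 𝒵 : Type*} [Fintype ι] [DecidableEq ι] (ℓ : 𝒵 → ℝ → ℝ) (c : ℝ)

def looRisk (v : ι → 𝒵) (j : ι) (θ : ℝ) : ℝ :=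
  ∑ i ∈ Finset.univ.erase j, ℓ (v i) θ

noncomputable def looThreshold (v : ι → 𝒵) (j : ι) : ℝ :=
  sInf {θ | looRisk ℓ v j θ ≤ c}

noncomputable def minLooThreshold (v : ι → 𝒵) : ℝ :=
  ⨅ j, looThreshold ℓ c v j

theorem looRisk_comp_perm (v : ι → 𝒵) (σ : Equiv.Perm ι) (j : ι) (θ : ℝ) :
    looRisk ℓ (v ∘ σ) j θ = looRisk ℓ v (σ j) θ := by
  simp only [looRisk, Finset.sum_erase_eq_sub (Finset.mem_univ _), Function.comp_apply,
    Equiv.sum_comp σ fun i => ℓ (v i) θ]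

theorem minLooThreshold_comp_perm (v : ι → 𝒵) (σ : Equiv.Perm ι) :
    minLooThreshold ℓ c (v ∘ σ) = minLooThreshold ℓ c v := by
  simp only [minLooThreshold, looThreshold, looRisk_comp_perm]
  exact σ.surjective.iInf_comp fun j => sInf {θ | looRisk ℓ v j θ ≤ c}

theorem minLooThreshold_le_looThreshold (v : ι → 𝒵) (j : ι) :
    minLooThreshold ℓ c v ≤ looThreshold ℓ c v j :=
  ciInf_le (Finite.bddBelow_range _) j

variable {ℓ c}

theorem looRisk_last {n : ℕ} (v : Fin (n + 1) → 𝒵) (θ : ℝ) :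
    looRisk ℓ v (Fin.last n) θ = ∑ i : Fin n, ℓ (v i.castSucc) θ := by
  rw [looRisk, Finset.sum_erase_eq_sub (Finset.mem_univ _), Fin.sum_univ_castSucc,
    add_sub_cancel_right]

theorem antitone_looRisk (hmono : ∀ w, Antitone (ℓ w)) (v : ι → 𝒵) (j : ι) :
    Antitone (looRisk ℓ v j) :=
  fun _ _ h => Finset.sum_le_sum fun i _ => hmono (v i) h

theorem continuousWithinAt_looRisk (hrc : ∀ w θ, ContinuousWithinAt (ℓ w) (Ici θ) θ)
    (v : ι → 𝒵) (j : ι) (θ : ℝ) : ContinuousWithinAt (looRisk ℓ v j) (Ici θ) θ :=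
  tendsto_finsetSum _ fun i _ => hrc (v i) θ

theorem exists_looRisk_le (hlim : ∀ w, Tendsto (ℓ w) atTop (nhds 0)) (hc : 0 < c)
    (v : ι → 𝒵) (j : ι) : ∃ θ, looRisk ℓ v j θ ≤ c := by
  have : Tendsto (looRisk ℓ v j) atTop (nhds 0) := by
    have := tendsto_finsetSum (Finset.univ.erase j) fun i _ => hlim (v i)
    rwa [Finset.sum_const_zero] at this
  exact (this.eventually_le_const hc).exists

theorem looRisk_looThreshold_le (hmono : ∀ w, Antitone (ℓ w))
    (hrc : ∀ w θ, ContinuousWithinAt (ℓ w) (Ici θ) θ)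
    (hlim : ∀ w, Tendsto (ℓ w) atTop (nhds 0)) (hc : 0 < c) (v : ι → 𝒵) (j : ι) :
    looRisk ℓ v j (looThreshold ℓ c v j) ≤ c :=
  (antitone_looRisk hmono v j).apply_sInf_setOf_le (continuousWithinAt_looRisk hrc v j)
    (exists_looRisk_le hlim hc v j)

theorem sum_apply_minLooThreshold_le [Nonempty ι] (hle : ∀ w θ, ℓ w θ ≤ 1)
    (hmono : ∀ w, Antitone (ℓ w)) (hrc : ∀ w θ, ContinuousWithinAt (ℓ w) (Ici θ) θ)
    (hlim : ∀ w, Tendsto (ℓ w) atTop (nhds 0)) (hc : 0 < c) (v : ι → 𝒵) :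
    ∑ j, ℓ (v j) (minLooThreshold ℓ c v) ≤ c + 1 := by
  obtain ⟨j, hj⟩ := exists_eq_ciInf_of_finite (f := looThreshold ℓ c v)
  rw [minLooThreshold, ← hj, ← Finset.add_sum_erase _ _ (Finset.mem_univ j), add_comm]
  exact add_le_add (looRisk_looThreshold_le hmono hrc hlim hc v j) (hle _ _)

variable [MeasurableSpace 𝒵]

theorem measurable_looThreshold (hℓ : Measurable fun p : 𝒵 × ℝ => ℓ p.1 p.2)
    (hmono : ∀ w, Antitone (ℓ w)) (hrc : ∀ w θ, ContinuousWithinAt (ℓ w) (Ici θ) θ)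
    (hlim : ∀ w, Tendsto (ℓ w) atTop (nhds 0)) (hc : 0 < c) (j : ι) :
    Measurable fun v => looThreshold ℓ c v j := by
  refine measurable_sInf_setOf_le (fun θ => ?_) (antitone_looRisk hmono · j)
    (continuousWithinAt_looRisk hrc · j) (exists_looRisk_le hlim hc · j)
  exact Finset.measurable_sum _ fun i _ =>
    hℓ.comp (f := fun v : ι → 𝒵 => (v i, θ)) ((measurable_pi_apply i).prodMk measurable_const)

theorem measurable_minLooThreshold (hℓ : Measurable fun p : 𝒵 × ℝ => ℓ p.1 p.2)
    (hmono : ∀ w, Antitone (ℓ w)) (hrc : ∀ w θ, ContinuousWithinAt (ℓ w) (Ici θ) θ)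
    (hlim : ∀ w, Tendsto (ℓ w) atTop (nhds 0)) (hc : 0 < c) :
    Measurable (minLooThreshold ℓ c : (ι → 𝒵) → ℝ) :=
  .iInf fun j => measurable_looThreshold hℓ hmono hrc hlim hc j

end LeaveOneOut

/-- **Conformal risk control guarantee** for monotone losses: with `θ̂` the smallest
threshold at which the calibration empirical risk (with denominator `n+1`) is at most
`α - 1/(n+1)`, the expected loss on the exchangeable test point is at most `α`. -/
theorem conformal_risk_control
    {Ω 𝒵 : Type*} [MeasurableSpace Ω] [MeasurableSpace 𝒵]
    (μ : Measure Ω) [IsProbabilityMeasure μ]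
    (n : ℕ) (Z : Fin (n + 1) → Ω → 𝒵)
    (ℓ : 𝒵 → ℝ → ℝ) (α : ℝ)
    (hα : α ∈ Set.Ioc (1 / (n + 1 : ℝ)) 1)
    (hZmeas : ∀ i, Measurable (Z i))
    (hℓmeas : Measurable (fun p : 𝒵 × ℝ => ℓ p.1 p.2))
    (hℓ : ∀ w θ, ℓ w θ ∈ Set.Icc (0 : ℝ) 1)
    (hmono : ∀ w, Antitone (ℓ w))
    (hrc : ∀ w θ, ContinuousWithinAt (ℓ w) (Set.Ici θ) θ)
    (hlim : ∀ w, Tendsto (ℓ w) atTop (nhds 0))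
    -- exchangeability
    (hexch : ∀ σ : Equiv.Perm (Fin (n + 1)),
      Measure.map (fun ω => fun i => Z (σ i) ω) μ = Measure.map (fun ω => fun i => Z i ω) μ) :
    (∫ ω, ℓ (Z (Fin.last n) ω)
        (sInf {θ : ℝ | (1 / (n + 1 : ℝ)) * ∑ i : Fin n, ℓ (Z i.castSucc ω) θ
          ≤ α - 1 / (n + 1 : ℝ)}) ∂μ) ≤ α := by
  have hn : (0 : ℝ) < n + 1 := by positivity
  set c := (n + 1 : ℝ) * α - 1 with hc_def
  have hc : 0 < c := by
    have := (div_lt_iff₀ hn).mp hα.1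
    linarith [mul_comm α (n + 1 : ℝ)]
  have hθhat : ∀ ω, sInf {θ : ℝ | (1 / (n + 1 : ℝ)) * ∑ i : Fin n, ℓ (Z i.castSucc ω) θ
      ≤ α - 1 / (n + 1 : ℝ)} = looThreshold ℓ c (fun i => Z i ω) (Fin.last n) := fun ω => by
    congr 1 with θ
    rw [mem_ofPred_eq, mem_ofPred_eq, looRisk_last, one_div_mul_eq_div, le_sub_iff_add_le,
      ← add_div, div_le_iff₀ hn, hc_def, le_sub_iff_add_le, mul_comm]
  have hint : ∀ j {T : Ω → ℝ}, Measurable T → Integrable (fun ω => ℓ (Z j ω) (T ω)) μ :=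
    fun j T hT => .of_mem_Icc 0 1 (hℓmeas.comp ((hZmeas j).prodMk hT)).aemeasurable
      (ae_of_all _ fun ω => hℓ _ _)
  have hV : Measurable fun ω i => Z i ω := measurable_pi_lambda _ hZmeas
  have hmin := measurable_minLooThreshold hℓmeas hmono hrc hlim hc (ι := Fin (n + 1))
  simp only [hθhat]
  calc ∫ ω, ℓ (Z (Fin.last n) ω) (looThreshold ℓ c (fun i => Z i ω) (Fin.last n)) ∂μ
      ≤ ∫ ω, ℓ (Z (Fin.last n) ω) (minLooThreshold ℓ c fun i => Z i ω) ∂μ :=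
        integral_mono (hint _ ((measurable_looThreshold hℓmeas hmono hrc hlim hc _).comp hV))
          (hint _ (hmin.comp hV)) fun ω => hmono _ (minLooThreshold_le_looThreshold ℓ c _ _)
    _ ≤ (c + 1) / Fintype.card (Fin (n + 1)) :=
        Exchangeable.integral_le_of_sum_le (G := fun w v => ℓ w (minLooThreshold ℓ c v)) hexch
          hZmeas (hℓmeas.comp (measurable_fst.prodMk (hmin.comp measurable_snd)))
          (fun w v σ => by rw [minLooThreshold_comp_perm]) (fun j => hint j (hmin.comp hV))
          (sum_apply_minLooThreshold_le (fun w θ => (hℓ w θ).2) hmono hrc hlim hc) _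
    _ = α := by
        rw [Fintype.card_fin, hc_def]
        field_simp
        push_cast
        ring
end

section
/- Fix $\alpha\in\mathbb{R}$, $n\ge 1$, and constants $L,m,r>0$ with $\frac{1}{n+1}<mr$. Let $\ell(z;\theta)$ be continuous and $L$-Lipschitz in $\theta$ for every $z$, with values in $[0,1]$. Let $z_1,\ldots,z_{n+1}$ be points, $\hat{R}_{1:n+1}(\theta)=\frac{1}{n+1}\sum_j\ell(z_j;\theta)$, $\hat{R}_{-i}(\theta)=\frac{1}{n}\sum_{j\ne i}\ell(z_j;\theta)$, and $\hat\theta_{n+1}=\inf\{\theta:\hat{R}_{1:n+1}(\theta)\le\alpha\}$ finite. Assume: $\hat{R}_{1:n+1}(\theta)\le\alpha-m(\theta-\hat\theta_{n+1})$ for all $\theta\in[\hat\theta_{n+1},\hat\theta_{n+1}+r]$; $\hat{R}_{1:n+1}(\theta)\ge\alpha+m(\hat\theta_{n+1}-\theta)$ for all $\theta\in[\hat\theta_{n+1}-r,\hat\theta_{n+1}]$; and $\hat{R}_{1:n+1}(\theta)\ge\alpha+mr$ for all $\theta<\hat\theta_{n+1}-r$. Then for every $i$, the leave-one-out root $\hat\theta_{-i}=\inf\{\theta:\hat{R}_{-i}(\theta)\le\alpha\}$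 satisfies $|\hat\theta_{-i}-\hat\theta_{n+1}|\le\frac{1}{m(n+1)}$. -/
/-- **Leave-one-out root stability for smooth losses** (part of Proposition 3):
under a local linear crossing of slope `m` over radius `r` and the separation
condition `1/(n+1) < m r`, every leave-one-out leftmost root is within
`1/(m(n+1))` of the full-data leftmost root. -/
theorem smooth_root_stability
    {𝒵 : Type*} (n : ℕ) (z : Fin (n + 1) → 𝒵)
    (ℓ : 𝒵 → ℝ → ℝ) (α L m r : ℝ)
    (hL : 0 < L) (hm : 0 < m) (hr : 0 < r)
    (hsep : 1 / (n + 1 : ℝ) < m * r)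
    (hℓ : ∀ w θ, ℓ w θ ∈ Set.Icc (0 : ℝ) 1)
    (hcont : ∀ w, Continuous (ℓ w))
    (hlip : ∀ w θ θ', |ℓ w θ - ℓ w θ'| ≤ L * |θ - θ'|)
    -- the full-data leftmost root is "finite": the constraint set is nonempty and bounded below
    (hne : {θ : ℝ | (1 / (n + 1 : ℝ)) * ∑ j : Fin (n + 1), ℓ (z j) θ ≤ α}.Nonempty)
    (hbdd : BddBelow {θ : ℝ | (1 / (n + 1 : ℝ)) * ∑ j : Fin (n + 1), ℓ (z j) θ ≤ α})
    -- local slope and separation conditions at the full-data root θ̂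
    (hslope_right : ∀ θ ∈ Set.Icc (sInf {θ : ℝ | (1 / (n + 1 : ℝ)) * ∑ j : Fin (n + 1), ℓ (z j) θ ≤ α})
        (sInf {θ : ℝ | (1 / (n + 1 : ℝ)) * ∑ j : Fin (n + 1), ℓ (z j) θ ≤ α} + r),
      (1 / (n + 1 : ℝ)) * ∑ j : Fin (n + 1), ℓ (z j) θ
        ≤ α - m * (θ - sInf {θ : ℝ | (1 / (n + 1 : ℝ)) * ∑ j : Fin (n + 1), ℓ (z j) θ ≤ α}))
    (hslope_left : ∀ θ ∈ Set.Icc (sInf {θ : ℝ | (1 / (n + 1 : ℝ)) * ∑ j : Fin (n + 1), ℓ (z j) θ ≤ α} - r)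
        (sInf {θ : ℝ | (1 / (n + 1 : ℝ)) * ∑ j : Fin (n + 1), ℓ (z j) θ ≤ α}),
      α + m * (sInf {θ : ℝ | (1 / (n + 1 : ℝ)) * ∑ j : Fin (n + 1), ℓ (z j) θ ≤ α} - θ)
        ≤ (1 / (n + 1 : ℝ)) * ∑ j : Fin (n + 1), ℓ (z j) θ)
    (hfar : ∀ θ < sInf {θ : ℝ | (1 / (n + 1 : ℝ)) * ∑ j : Fin (n + 1), ℓ (z j) θ ≤ α} - r,
      α + m * r ≤ (1 / (n + 1 : ℝ)) * ∑ j : Fin (n + 1), ℓ (z j) θ) :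
    ∀ i : Fin (n + 1),
      |sInf {θ : ℝ | (1 / (n : ℝ)) * ∑ j ∈ Finset.univ.erase i, ℓ (z j) θ ≤ α}
        - sInf {θ : ℝ | (1 / (n + 1 : ℝ)) * ∑ j : Fin (n + 1), ℓ (z j) θ ≤ α}|
      ≤ 1 / (m * (n + 1 : ℝ)) := by
  classical
  intro i
  set S := {θ : ℝ | (1 / (n + 1 : ℝ)) * ∑ j : Fin (n + 1), ℓ (z j) θ ≤ α} with hSdef
  set T := {θ : ℝ | (1 / (n : ℝ)) * ∑ j ∈ Finset.univ.erase i, ℓ (z j) θ ≤ α} with hTdef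
  set θh := sInf S with hθhdef
  set ε := 1 / (m * ((n : ℝ) + 1)) with hεdef
  have hn1 : (0:ℝ) < (n:ℝ) + 1 := by positivity
  have hR0 : ∀ θ, 0 ≤ (1 / ((n:ℝ) + 1)) * ∑ j : Fin (n + 1), ℓ (z j) θ := by
    intro θ
    have h : 0 ≤ ∑ j : Fin (n+1), ℓ (z j) θ :=
      Finset.sum_nonneg fun j _ => (hℓ (z j) θ).1
    positivity
  have hR1 : ∀ θ, (1 / ((n:ℝ) + 1)) * ∑ j : Fin (n + 1), ℓ (z j) θ ≤ 1 := by
    intro θ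
    have h1 : ∑ j : Fin (n+1), ℓ (z j) θ ≤ (n:ℝ) + 1 := by
      calc ∑ j : Fin (n+1), ℓ (z j) θ ≤ ∑ _j : Fin (n+1), (1:ℝ) :=
            Finset.sum_le_sum fun j _ => (hℓ (z j) θ).2
        _ = (n:ℝ) + 1 := by simp
    rw [div_mul_eq_mul_div, one_mul, div_le_one hn1]
    exact h1
  have hα0 : 0 ≤ α := by
    obtain ⟨θ₀, hθ₀⟩ := hne
    rw [hSdef, Set.mem_setOf_eq] at hθ₀
    exact le_trans (hR0 θ₀) hθ₀
  have hmr1 : α + m * r ≤ 1 := by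
    have h := hslope_left (θh - r) ⟨le_refl _, by linarith⟩
    have hrr : θh - (θh - r) = r := by ring
    rw [hrr] at h
    linarith [hR1 (θh - r)]
  have hnpos : (0:ℝ) < (n:ℝ) := by
    rcases Nat.eq_zero_or_pos n with h0 | hpos
    · exfalso
      subst h0
      norm_num at hsep
      linarith
    · exact_mod_cast hpos
  have hloo : ∀ θ, |(1 / (n : ℝ)) * ∑ j ∈ Finset.univ.erase i, ℓ (z j) θ
      - (1 / ((n:ℝ) + 1)) * ∑ j : Fin (n + 1), ℓ (z j) θ| ≤ 1 / ((n:ℝ) + 1) := by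
    intro θ
    set s := ∑ j ∈ Finset.univ.erase i, ℓ (z j) θ with hs
    have hsum : ∑ j : Fin (n+1), ℓ (z j) θ = s + ℓ (z i) θ :=
      (Finset.sum_erase_add _ _ (Finset.mem_univ i)).symm
    have hs0 : 0 ≤ s := Finset.sum_nonneg fun j _ => (hℓ (z j) θ).1
    have hsn : s ≤ (n : ℝ) := by
      calc s ≤ ∑ _j ∈ Finset.univ.erase i, (1:ℝ) :=
            Finset.sum_le_sum fun j _ => (hℓ (z j) θ).2
        _ = (n:ℝ) := by
            simp [Finset.card_erase_of_mem]
    have hi0 := (hℓ (z i) θ).1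
    have hi1 := (hℓ (z i) θ).2
    have key : (1/(n:ℝ)) * s - (1/((n:ℝ)+1)) * (s + ℓ (z i) θ)
        = (s - (n:ℝ) * ℓ (z i) θ) / ((n:ℝ) * ((n:ℝ)+1)) := by
      field_simp
      ring
    have h2 : |s - (n:ℝ) * ℓ (z i) θ| ≤ (n:ℝ) := by
      rw [abs_le]
      constructor <;> nlinarith
    rw [hsum]
    calc |(1/(n:ℝ)) * s - (1/((n:ℝ)+1)) * (s + ℓ (z i) θ)|
        = |s - (n:ℝ) * ℓ (z i) θ| / ((n:ℝ) * ((n:ℝ)+1)) := by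
          rw [key, abs_div, abs_of_pos (a := (n:ℝ) * ((n:ℝ)+1)) (by positivity)]
      _ ≤ (n:ℝ) / ((n:ℝ) * ((n:ℝ)+1)) := by gcongr
      _ = 1 / ((n:ℝ)+1) := by
          field_simp
  have hεpos : 0 < ε := by rw [hεdef]; positivity
  have hmε : m * ε = 1 / ((n:ℝ) + 1) := by
    rw [hεdef]
    field_simp
  have hεr : ε < r := by
    rw [hεdef, div_lt_iff₀ (by positivity)]
    rw [div_lt_iff₀ hn1] at hsep
    nlinarith
  have hmem : θh + ε ∈ T := by
    have h1 := hslope_right (θh + ε) ⟨by linarith, by linarith⟩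
    have h2 : m * ((θh + ε) - θh) = 1/((n:ℝ)+1) := by
      rw [show (θh + ε) - θh = ε by ring, hmε]
    rw [h2] at h1
    have h3 := hloo (θh + ε)
    rw [abs_le] at h3
    rw [hTdef, Set.mem_setOf_eq]
    linarith [h3.1]
  have hTlb : ∀ θ ∈ T, θh - ε ≤ θ := by
    intro θ hθ
    by_contra hcon
    push_neg at hcon
    rw [hTdef, Set.mem_setOf_eq] at hθ
    have h3 := hloo θ
    rw [abs_le] at h3
    rcases le_or_gt (θh - r) θ with hcase | hcase
    · have h1 := hslope_left θ ⟨hcase, by linarith⟩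
      have h4 : 1/((n:ℝ)+1) < m * (θh - θ) := by
        rw [← hmε]
        have hlt : ε < θh - θ := by linarith
        nlinarith
      linarith [h3.1]
    · have h1 := hfar θ hcase
      have h4 : 1/((n:ℝ)+1) < m * r := hsep
      linarith [h3.1]
  have hTne : T.Nonempty := ⟨θh + ε, hmem⟩
  have hTbdd : BddBelow T := ⟨θh - ε, fun θ hθ => hTlb θ hθ⟩
  have hub : sInf T ≤ θh + ε := csInf_le hTbdd hmem
  have hlb : θh - ε ≤ sInf T := le_csInf hTne hTlb
  rw [abs_le]
  constructor <;> linarith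
end

section
/- Let $z_1,\ldots,z_{n+1}\in\mathcal{Z}$, let $\ell(z;\cdot):\mathbb{R}^d\to\mathbb{R}$ be convex with $|\ell(z;\theta)-\ell(z;\theta')|\le\rho(z)\|\theta-\theta'\|_2$, let $\lambda>0$, and define $\hat\theta_{n+1}=\arg\min_\theta \frac{1}{n+1}\sum_{j=1}^{n+1}\ell(z_j;\theta)+\frac{\lambda}{2}\|\theta\|_2^2$ and $\hat\theta_{-i}=\arg\min_\theta \frac{1}{n}\sum_{j\ne i}\ell(z_j;\theta)+\frac{\lambda}{2}\|\theta\|_2^2$. Then for every $i$, $\rho(z_i)\|\hat\theta_{n+1}-\hat\theta_{-i}\|_2\le\frac{1}{\lambda(n+1)}\big(\rho(z_i)^2+\frac{1}{n}\sum_{j\ne i}\rho(z_i)\rho(z_j)\big)$, and averaging, $\frac{1}{n+1}\sum_{i=1}^{n+1}\rho(z_i)\|\hat\theta_{n+1}-\hat\theta_{-i}\|_2\le\frac{2}{\lambda(n+1)^2}\sum_{i=1}^{n+1}\rho(z_i)^2$. -/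
/-!
Both regularized objectives are `λ`-strongly convex, so each grows at least like
`λ/2 ‖θ - θ̂‖²` away from its minimizer. Adding the two growth inequalities at the two minimizers,
the regularizers cancel and `λ ‖θ̂ₙ₊₁ - θ̂₋ᵢ‖²` is bounded by the increment of the difference of
the empirical risks, which is `(ρ(zᵢ) + (1/n) ∑_{j ≠ i} ρ(zⱼ))/(n+1)`-Lipschitz. Averaging over `i`
uses `∑ᵢ ∑_{j ≠ i} ρ(zᵢ)ρ(zⱼ) = (∑ᵢ ρ(zᵢ))² - ∑ᵢ ρ(zᵢ)² ≤ n ∑ᵢ ρ(zᵢ)²` (Cauchy–Schwarz).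
-/

open Finset Filter Topology

lemma convexOn_sum {ι E : Type*} [AddCommGroup E] [Module ℝ E] {s : Set E} {t : Finset ι}
    {f : ι → E → ℝ} (hs : Convex ℝ s) (hf : ∀ i ∈ t, ConvexOn ℝ s (f i)) :
    ConvexOn ℝ s fun x ↦ ∑ i ∈ t, f i x := by
  rw [← Finset.sum_fn]
  exact Finset.sum_induction f (ConvexOn ℝ s) (fun _ _ ↦ ConvexOn.add) (convexOn_const 0 hs) hf

lemma sub_sum_erase_le_mul_norm {ι E : Type*} [DecidableEq ι] [SeminormedAddCommGroup E]
    {s : Finset ι} {i : ι} (hi : i ∈ s) {a b : ℝ} (ha : 0 ≤ a) (hab : a ≤ b)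
    {f : ι → E → ℝ} {ρ : ι → ℝ} (hf : ∀ j x y, |f j x - f j y| ≤ ρ j * ‖x - y‖) (u v : E) :
    (a * ∑ j ∈ s, f j v - b * ∑ j ∈ s.erase i, f j v)
        - (a * ∑ j ∈ s, f j u - b * ∑ j ∈ s.erase i, f j u)
      ≤ (a * ρ i + (b - a) * ∑ j ∈ s.erase i, ρ j) * ‖u - v‖ := by
  have hfi : f i v - f i u ≤ ρ i * ‖u - v‖ := by
    simpa only [norm_sub_rev] using (le_abs_self _).trans (hf i v u)
  have hrest : ∑ j ∈ s.erase i, (f j u - f j v) ≤ ∑ j ∈ s.erase i, ρ j * ‖u - v‖ :=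
    sum_le_sum fun j _ ↦ (le_abs_self _).trans (hf j u v)
  rw [← sum_mul, sum_sub_distrib] at hrest
  rw [← add_sum_erase s _ hi, ← add_sum_erase s _ hi]
  nlinarith [mul_le_mul_of_nonneg_left hfi ha, mul_le_mul_of_nonneg_left hrest (sub_nonneg.2 hab)]

lemma sum_sum_erase_mul_le {ι : Type*} [DecidableEq ι] (s : Finset ι) (a : ι → ℝ) :
    ∑ i ∈ s, ∑ j ∈ s.erase i, a i * a j ≤ (#s - 1) * ∑ i ∈ s, a i ^ 2 := by
  have hrow : ∀ i ∈ s, ∑ j ∈ s.erase i, a i * a j = a i * ∑ j ∈ s, a j - a i ^ 2 := by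
    intro i hi
    rw [← mul_sum, ← add_sum_erase s _ hi]
    ring
  rw [sum_congr rfl hrow, sum_sub_distrib, ← sum_mul, ← sq]
  linarith [sq_sum_le_card_mul_sum_sq (s := s) (f := a)]

section InnerProductSpace

variable {E : Type*} [NormedAddCommGroup E] [InnerProductSpace ℝ E]

lemma ConvexOn.strongConvexOn_add_sq_norm {s : Set E} {f : E → ℝ} (hf : ConvexOn ℝ s f) (m : ℝ) :
    StrongConvexOn s m fun x ↦ f x + m / 2 * ‖x‖ ^ 2 :=
  strongConvexOn_iff_convex.2 (by simpa using hf)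

lemma StrongConvexOn.add_sq_norm_sub_le_of_isMinOn {f : E → ℝ} {m : ℝ} {u : E}
    (hf : StrongConvexOn Set.univ m f) (hu : IsMinOn f Set.univ u) (x : E) :
    f u + m / 2 * ‖u - x‖ ^ 2 ≤ f x := by
  have hsegment : ∀ t ∈ Set.Ioo (0 : ℝ) 1, f u + (1 - t) * (m / 2 * ‖u - x‖ ^ 2) ≤ f x := by
    rintro t ⟨ht₀, ht₁⟩
    have hconv := hf.2 (Set.mem_univ u) (Set.mem_univ x) (sub_nonneg.2 ht₁.le) ht₀.le
      (sub_add_cancel 1 t)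
    have hmin := isMinOn_univ_iff.1 hu ((1 - t) • u + t • x)
    simp only [smul_eq_mul] at hconv
    nlinarith
  have hlim : Tendsto (fun t : ℝ ↦ f u + (1 - t) * (m / 2 * ‖u - x‖ ^ 2)) (𝓝[>] 0)
      (𝓝 (f u + m / 2 * ‖u - x‖ ^ 2)) := by
    have hcont : Continuous fun t : ℝ ↦ f u + (1 - t) * (m / 2 * ‖u - x‖ ^ 2) := by fun_prop
    exact (hcont.tendsto' 0 _ (by simp)).mono_left nhdsWithin_le_nhds
  exact le_of_tendsto hlim (eventually_of_mem (Ioo_mem_nhdsGT one_pos) hsegment)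

lemma StrongConvexOn.mul_norm_sub_le_of_isMinOn {f g : E → ℝ} {m L : ℝ} {u v : E} (hL : 0 ≤ L)
    (hf : StrongConvexOn Set.univ m f) (hg : StrongConvexOn Set.univ m g)
    (hu : IsMinOn f Set.univ u) (hv : IsMinOn g Set.univ v)
    (hfg : (f v - g v) - (f u - g u) ≤ L * ‖u - v‖) :
    m * ‖u - v‖ ≤ L := by
  have hfu := hf.add_sq_norm_sub_le_of_isMinOn hu v
  have hgv := hg.add_sq_norm_sub_le_of_isMinOn hv u
  rw [norm_sub_rev] at hgv
  rcases (norm_nonneg (u - v)).eq_or_lt with hD | hD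
  · rwa [← hD, mul_zero]
  · nlinarith

lemma mul_norm_sub_le_of_isMinOn_regularized_sum_erase {ι : Type*} [DecidableEq ι]
    {s : Finset ι} {i : ι} (hi : i ∈ s) {a b lam : ℝ} (ha : 0 ≤ a) (hab : a ≤ b)
    {f : ι → E → ℝ} {ρ : ι → ℝ} (hρ : ∀ j, 0 ≤ ρ j) (hconv : ∀ j, ConvexOn ℝ Set.univ (f j))
    (hlip : ∀ j x y, |f j x - f j y| ≤ ρ j * ‖x - y‖) {u v : E}
    (hu : ∀ x, a * ∑ j ∈ s, f j u + lam / 2 * ‖u‖ ^ 2 ≤ a * ∑ j ∈ s, f j x + lam / 2 * ‖x‖ ^ 2)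
    (hv : ∀ x, b * ∑ j ∈ s.erase i, f j v + lam / 2 * ‖v‖ ^ 2
      ≤ b * ∑ j ∈ s.erase i, f j x + lam / 2 * ‖x‖ ^ 2) :
    lam * ‖u - v‖ ≤ a * ρ i + (b - a) * ∑ j ∈ s.erase i, ρ j := by
  have hrisk : ∀ (t : Finset ι) (c : ℝ), 0 ≤ c →
      StrongConvexOn Set.univ lam fun x ↦ c * ∑ j ∈ t, f j x + lam / 2 * ‖x‖ ^ 2 :=
    fun t c hc ↦
      ((convexOn_sum convex_univ fun j _ ↦ hconv j).smul hc).strongConvexOn_add_sq_norm lam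
  have hL : 0 ≤ a * ρ i + (b - a) * ∑ j ∈ s.erase i, ρ j :=
    add_nonneg (mul_nonneg ha (hρ i))
      (mul_nonneg (sub_nonneg.2 hab) (sum_nonneg fun j _ ↦ hρ j))
  refine StrongConvexOn.mul_norm_sub_le_of_isMinOn hL (hrisk s a ha)
    (hrisk (s.erase i) b (ha.trans hab)) (isMinOn_univ_iff.2 hu) (isMinOn_univ_iff.2 hv) ?_
  convert sub_sum_erase_le_mul_norm hi ha hab hlip u v using 1
  ring

end InnerProductSpace

/-- **Parameter-shift bound for regularized ERM** (key step of Proposition 6): with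
convex `ρ(z)`-Lipschitz losses and regularization `λ > 0`, the full-data minimizer and
each leave-one-out minimizer satisfy the weighted shift bound, and on average
`(1/(n+1)) ∑ᵢ ρ(zᵢ)‖θ̂₊ - θ̂₋ᵢ‖ ≤ (2/(λ(n+1)²)) ∑ᵢ ρ(zᵢ)²`. -/
theorem erm_parameter_shift
    {𝒵 : Type*} (d n : ℕ) (hn : 0 < n)
    (z : Fin (n + 1) → 𝒵) (ℓ : 𝒵 → EuclideanSpace ℝ (Fin d) → ℝ) (ρ : 𝒵 → ℝ)
    (hρ : ∀ w, 0 ≤ ρ w)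
    (hconv : ∀ w, ConvexOn ℝ Set.univ (ℓ w))
    (hlip : ∀ w θ θ', |ℓ w θ - ℓ w θ'| ≤ ρ w * ‖θ - θ'‖)
    (lam : ℝ) (hlam : 0 < lam)
    (θfull : EuclideanSpace ℝ (Fin d)) (θm : Fin (n + 1) → EuclideanSpace ℝ (Fin d))
    -- θfull minimizes the full-data regularized empirical risk
    (hfull : ∀ θ, (1 / (n + 1 : ℝ)) * ∑ j : Fin (n + 1), ℓ (z j) θfull + lam / 2 * ‖θfull‖ ^ 2
      ≤ (1 / (n + 1 : ℝ)) * ∑ j : Fin (n + 1), ℓ (z j) θ + lam / 2 * ‖θ‖ ^ 2)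
    -- θm i minimizes the leave-one-out regularized empirical risk
    (hm : ∀ (i : Fin (n + 1)) (θ),
      (1 / (n : ℝ)) * ∑ j ∈ Finset.univ.erase i, ℓ (z j) (θm i) + lam / 2 * ‖θm i‖ ^ 2
        ≤ (1 / (n : ℝ)) * ∑ j ∈ Finset.univ.erase i, ℓ (z j) θ + lam / 2 * ‖θ‖ ^ 2) :
    (∀ i : Fin (n + 1),
      ρ (z i) * ‖θfull - θm i‖
        ≤ (1 / (lam * (n + 1 : ℝ))) *
            (ρ (z i) ^ 2 + (1 / (n : ℝ)) * ∑ j ∈ Finset.univ.erase i, ρ (z i) * ρ (z j)))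
    ∧ (1 / (n + 1 : ℝ)) * ∑ i : Fin (n + 1), ρ (z i) * ‖θfull - θm i‖
        ≤ (2 / (lam * (n + 1 : ℝ) ^ 2)) * ∑ i : Fin (n + 1), ρ (z i) ^ 2 := by
  have hn₀ : (0 : ℝ) < n := by exact_mod_cast hn
  have hpoint : ∀ i, ρ (z i) * ‖θfull - θm i‖
      ≤ 1 / (lam * (n + 1)) * (ρ (z i) ^ 2 + 1 / n * ∑ j ∈ univ.erase i, ρ (z i) * ρ (z j)) := by
    intro i
    have hshift := mul_norm_sub_le_of_isMinOn_regularized_sum_erase (mem_univ i) (by positivity)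
      (one_div_le_one_div_of_le hn₀ (by linarith)) (fun j ↦ hρ (z j)) (fun j ↦ hconv (z j))
      (fun j ↦ hlip (z j)) hfull (hm i)
    calc ρ (z i) * ‖θfull - θm i‖
        ≤ ρ (z i) * ((1 / (n + 1) * ρ (z i)
            + (1 / n - 1 / (n + 1)) * ∑ j ∈ univ.erase i, ρ (z j)) / lam) :=
          mul_le_mul_of_nonneg_left ((le_div_iff₀' hlam).2 hshift) (hρ (z i))
      _ = _ := by rw [← mul_sum]; field_simp; ring
  refine ⟨hpoint, ?_⟩
  have hcross := sum_sum_erase_mul_le univ fun i ↦ ρ (z i)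
  simp only [card_univ, Fintype.card_fin, Nat.cast_add, Nat.cast_one, add_sub_cancel_right]
    at hcross
  calc 1 / (n + 1 : ℝ) * ∑ i, ρ (z i) * ‖θfull - θm i‖
      ≤ 1 / (n + 1 : ℝ) * ∑ i, 1 / (lam * (n + 1)) *
          (ρ (z i) ^ 2 + 1 / n * ∑ j ∈ univ.erase i, ρ (z i) * ρ (z j)) :=
        mul_le_mul_of_nonneg_left (sum_le_sum fun i _ ↦ hpoint i) (by positivity)
    _ = 1 / (lam * (n + 1) ^ 2) * (∑ i, ρ (z i) ^ 2
          + 1 / n * ∑ i, ∑ j ∈ univ.erase i, ρ (z i) * ρ (z j)) := by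
        rw [← mul_sum, sum_add_distrib, ← mul_sum]; field_simp
    _ ≤ 1 / (lam * (n + 1) ^ 2) * (∑ i, ρ (z i) ^ 2 + 1 / n * (n * ∑ i, ρ (z i) ^ 2)) := by
        gcongr
    _ = _ := by field_simp; ring
end

section
/- In the setting of regularized ERM with convex, $\rho(z)$-Lipschitz losses and regularization $\lambda>0$: the leave-one-out stability bound $\frac{1}{n+1}\sum_{i=1}^{n+1}\ell(z_i;\hat\theta_{-i}) \le \frac{1}{n+1}\sum_{i=1}^{n+1}\ell(z_i;\hat\theta_{n+1}) + \frac{2}{\lambda(n+1)^2}\sum_{i=1}^{n+1}\rho(z_i)^2$ holds deterministically for any $z_1,\ldots,z_{n+1}$. -/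
/-!
Both regularized objectives are `λ`-strongly convex, so each grows quadratically away from its
minimizer. Adding the two growth inequalities, the regularizers cancel and `λ ‖θ̂₋ᵢ - θ̂‖²` is
bounded by the change, between the two minimizers, of the difference of the two empirical risks.
That difference is `(ℓᵢ - (1/n) ∑_{j ≠ i} ℓⱼ) / (n+1)`, which is Lipschitz, so
`‖θ̂₋ᵢ - θ̂‖ ≤ (ρᵢ + (1/n) ∑_{j ≠ i} ρⱼ) / (λ (n+1))`. The loss at `zᵢ` moves by at most `ρᵢ` times
this, and summing over `i` the cross terms are controlled by Cauchy–Schwarz,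
`(∑ ρⱼ)² ≤ (n+1) ∑ ρⱼ²`.
-/

open Filter Topology Finset

lemma ConvexOn.finset_sum {E ι : Type*} [AddCommMonoid E] [Module ℝ E] {t : Set E}
    (ht : Convex ℝ t) {s : Finset ι} {f : ι → E → ℝ} (hf : ∀ i ∈ s, ConvexOn ℝ t (f i)) :
    ConvexOn ℝ t fun x ↦ ∑ i ∈ s, f i x := by
  have := Finset.sum_induction f (ConvexOn ℝ t) (fun _ _ ↦ ConvexOn.add) (convexOn_const 0 ht) hf
  convert this using 1
  ext x
  rw [Finset.sum_apply]

lemma StrongConvexOn.add_sq_norm_sub_le_of_isMinOn_s15 {E : Type*} [NormedAddCommGroup E]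
    [NormedSpace ℝ E] {s : Set E} {g : E → ℝ} {m : ℝ} {a b : E} (hg : StrongConvexOn s m g)
    (ha : a ∈ s) (hmin : IsMinOn g s a) (hb : b ∈ s) :
    g a + m / 2 * ‖b - a‖ ^ 2 ≤ g b := by
  have hsegment : ∀ t ∈ Set.Ioo (0 : ℝ) 1, g a + m / 2 * (1 - t) * ‖b - a‖ ^ 2 ≤ g b := by
    rintro t ⟨ht0, ht1⟩
    have hconv := hg.2 ha hb (sub_nonneg.2 ht1.le) ht0.le (sub_add_cancel 1 t)
    have hle : g a ≤ g ((1 - t) • a + t • b) :=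
      hmin (hg.1 ha hb (sub_nonneg.2 ht1.le) ht0.le (sub_add_cancel 1 t))
    rw [smul_eq_mul, smul_eq_mul, norm_sub_rev] at hconv
    have : t * (g a + m / 2 * (1 - t) * ‖b - a‖ ^ 2) ≤ t * g b := by nlinarith
    exact le_of_mul_le_mul_left this ht0
  have hlim : Tendsto (fun t : ℝ ↦ g a + m / 2 * (1 - t) * ‖b - a‖ ^ 2) (𝓝[>] 0)
      (𝓝 (g a + m / 2 * (1 - 0) * ‖b - a‖ ^ 2)) :=
    (Continuous.tendsto (by fun_prop) 0).mono_left nhdsWithin_le_nhds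
  simpa using le_of_tendsto hlim (mem_of_superset (Ioo_mem_nhdsGT one_pos) hsegment)

section InnerProductSpace

variable {E : Type*} [NormedAddCommGroup E] [InnerProductSpace ℝ E]

lemma ConvexOn.add_sq_norm_sub_le_of_forall_le {f : E → ℝ} {lam : ℝ} {a : E}
    (hf : ConvexOn ℝ Set.univ f)
    (ha : ∀ x, f a + lam / 2 * ‖a‖ ^ 2 ≤ f x + lam / 2 * ‖x‖ ^ 2) (b : E) :
    f a + lam / 2 * ‖a‖ ^ 2 + lam / 2 * ‖b - a‖ ^ 2 ≤ f b + lam / 2 * ‖b‖ ^ 2 := by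
  have hstrong : StrongConvexOn Set.univ lam fun x ↦ f x + lam / 2 * ‖x‖ ^ 2 :=
    strongConvexOn_iff_convex.2 (by simpa only [add_sub_cancel_right] using hf)
  exact hstrong.add_sq_norm_sub_le_of_isMinOn_s15 (Set.mem_univ a)
    (isMinOn_univ_iff.2 ha) (Set.mem_univ b)

lemma norm_sub_le_div_of_forall_le_add_sq_norm {f g : E → ℝ} {lam K : ℝ} {a b : E}
    (hf : ConvexOn ℝ Set.univ f) (hg : ConvexOn ℝ Set.univ g) (hlam : 0 < lam) (hK : 0 ≤ K)
    (ha : ∀ x, f a + lam / 2 * ‖a‖ ^ 2 ≤ f x + lam / 2 * ‖x‖ ^ 2)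
    (hb : ∀ x, g b + lam / 2 * ‖b‖ ^ 2 ≤ g x + lam / 2 * ‖x‖ ^ 2)
    (hshift : (g a - f a) - (g b - f b) ≤ K * ‖a - b‖) :
    ‖a - b‖ ≤ K / lam := by
  have hfa := hf.add_sq_norm_sub_le_of_forall_le ha b
  have hgb := hg.add_sq_norm_sub_le_of_forall_le hb a
  rw [norm_sub_rev b a] at hfa
  have hquad : lam * ‖a - b‖ ^ 2 ≤ K * ‖a - b‖ := by linarith
  rw [le_div_iff₀ hlam]
  nlinarith [norm_nonneg (a - b)]

end InnerProductSpace

lemma inv_succ_mul_sum_sub_inv_mul_sum_erase_le {ι : Type*} [Fintype ι] [DecidableEq ι]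
    {n : ℕ} (hn : 0 < n) {Δ r : ι → ℝ} (h : ∀ j, |Δ j| ≤ r j) (i : ι) :
    1 / (n + 1 : ℝ) * ∑ j, Δ j - 1 / (n : ℝ) * ∑ j ∈ univ.erase i, Δ j
      ≤ (r i + (∑ j ∈ univ.erase i, r j) / n) / (n + 1) := by
  have hi : Δ i ≤ r i := le_of_abs_le (h i)
  have hrest : -∑ j ∈ univ.erase i, Δ j ≤ ∑ j ∈ univ.erase i, r j := by
    rw [← Finset.sum_neg_distrib]
    exact Finset.sum_le_sum fun j _ ↦ (neg_le_abs (Δ j)).trans (h j)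
  rw [← Finset.add_sum_erase _ _ (Finset.mem_univ i)]
  have hrw : 1 / (n + 1 : ℝ) * (Δ i + ∑ j ∈ univ.erase i, Δ j)
      - 1 / (n : ℝ) * ∑ j ∈ univ.erase i, Δ j
      = (Δ i + (-∑ j ∈ univ.erase i, Δ j) / n) / (n + 1) := by
    field_simp
    ring
  rw [hrw]
  gcongr

lemma sum_mul_add_sum_erase_div_le {ι : Type*} [Fintype ι] [DecidableEq ι] (ρ : ι → ℝ) {n : ℕ}
    (hcard : Fintype.card ι ≤ n + 1) :
    ∑ i, ρ i * (ρ i + (∑ j ∈ univ.erase i, ρ j) / n) ≤ 2 * ∑ i, ρ i ^ 2 := by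
  set Q := ∑ i, ρ i ^ 2
  have hQ : 0 ≤ Q := Finset.sum_nonneg fun i _ ↦ sq_nonneg (ρ i)
  have hcross : ∑ i, ρ i * ∑ j ∈ univ.erase i, ρ j = (∑ i, ρ i) ^ 2 - Q := by
    simp only [Finset.sum_erase_eq_sub, Finset.mem_univ, mul_sub, Finset.sum_sub_distrib,
      ← Finset.sum_mul, sq, Q]
  have hcs : (∑ i, ρ i) ^ 2 ≤ (n + 1) * Q := by
    refine sq_sum_le_card_mul_sum_sq.trans (mul_le_mul_of_nonneg_right ?_ hQ)
    exact_mod_cast hcard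
  calc ∑ i, ρ i * (ρ i + (∑ j ∈ univ.erase i, ρ j) / n)
      = Q + ((∑ i, ρ i) ^ 2 - Q) / n := by
        simp_rw [mul_add, Finset.sum_add_distrib, mul_div_assoc', ← Finset.sum_div, hcross, ← sq]
        rfl
    _ ≤ Q + Q := by
        gcongr
        exact div_le_of_le_mul₀ (Nat.cast_nonneg n) hQ (by linarith)
    _ = 2 * Q := by ring

lemma norm_sub_le_of_isMin_regularized_risk_erase {ι E : Type*} [Fintype ι] [DecidableEq ι]
    [NormedAddCommGroup E] [InnerProductSpace ℝ E] {ℓ : ι → E → ℝ} {ρ : ι → ℝ} {n : ℕ}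
    {lam : ℝ} (hρ : ∀ j, 0 ≤ ρ j) (hconv : ∀ j, ConvexOn ℝ Set.univ (ℓ j))
    (hlip : ∀ j θ θ', |ℓ j θ - ℓ j θ'| ≤ ρ j * ‖θ - θ'‖) (hn : 0 < n) (hlam : 0 < lam)
    {θ θ' : E} (i : ι)
    (hθ : ∀ x, 1 / (n + 1 : ℝ) * ∑ j, ℓ j θ + lam / 2 * ‖θ‖ ^ 2
      ≤ 1 / (n + 1 : ℝ) * ∑ j, ℓ j x + lam / 2 * ‖x‖ ^ 2)
    (hθ' : ∀ x, 1 / (n : ℝ) * ∑ j ∈ univ.erase i, ℓ j θ' + lam / 2 * ‖θ'‖ ^ 2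
      ≤ 1 / (n : ℝ) * ∑ j ∈ univ.erase i, ℓ j x + lam / 2 * ‖x‖ ^ 2) :
    ‖θ' - θ‖ ≤ (ρ i + (∑ j ∈ univ.erase i, ρ j) / n) / (n + 1) / lam := by
  have hrisk : ∀ (s : Finset ι) (c : ℝ), 0 ≤ c → ConvexOn ℝ Set.univ fun x ↦ c * ∑ j ∈ s, ℓ j x :=
    fun s c hc ↦ (ConvexOn.finset_sum convex_univ fun j _ ↦ hconv j).smul hc
  have hK : 0 ≤ (ρ i + (∑ j ∈ univ.erase i, ρ j) / n) / (n + 1) := by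
    have := Finset.sum_nonneg fun j (_ : j ∈ univ.erase i) ↦ hρ j
    have := hρ i
    positivity
  rw [norm_sub_rev]
  refine norm_sub_le_div_of_forall_le_add_sq_norm (hrisk _ _ (by positivity))
    (hrisk _ _ (by positivity)) hlam hK hθ hθ' ?_
  have hdiff := inv_succ_mul_sum_sub_inv_mul_sum_erase_le hn (fun j ↦ hlip j θ' θ) i
  simp only [Finset.sum_sub_distrib, ← Finset.sum_mul] at hdiff
  rw [norm_sub_rev]
  have hKD : (ρ i + (∑ j ∈ univ.erase i, ρ j) / n) / (n + 1) * ‖θ' - θ‖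
      = (ρ i * ‖θ' - θ‖ + (∑ j ∈ univ.erase i, ρ j) * ‖θ' - θ‖ / n) / (n + 1) := by
    ring
  linarith

/-- **Leave-one-out loss stability of regularized ERM** (Proposition 6): with convex
`ρ(z)`-Lipschitz losses and regularization `λ > 0`, the average leave-one-out loss
exceeds the full-data loss by at most `(2/(λ(n+1)²)) ∑ᵢ ρ(zᵢ)²`, deterministically. -/
theorem erm_loss_stability
    {𝒵 : Type*} (d n : ℕ) (hn : 0 < n)
    (z : Fin (n + 1) → 𝒵) (ℓ : 𝒵 → EuclideanSpace ℝ (Fin d) → ℝ) (ρ : 𝒵 → ℝ)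
    (hρ : ∀ w, 0 ≤ ρ w)
    (hconv : ∀ w, ConvexOn ℝ Set.univ (ℓ w))
    (hlip : ∀ w θ θ', |ℓ w θ - ℓ w θ'| ≤ ρ w * ‖θ - θ'‖)
    (lam : ℝ) (hlam : 0 < lam)
    (θfull : EuclideanSpace ℝ (Fin d)) (θm : Fin (n + 1) → EuclideanSpace ℝ (Fin d))
    -- θfull minimizes the full-data regularized empirical risk
    (hfull : ∀ θ, (1 / (n + 1 : ℝ)) * ∑ j : Fin (n + 1), ℓ (z j) θfull + lam / 2 * ‖θfull‖ ^ 2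
      ≤ (1 / (n + 1 : ℝ)) * ∑ j : Fin (n + 1), ℓ (z j) θ + lam / 2 * ‖θ‖ ^ 2)
    -- θm i minimizes the leave-one-out regularized empirical risk
    (hm : ∀ (i : Fin (n + 1)) (θ),
      (1 / (n : ℝ)) * ∑ j ∈ Finset.univ.erase i, ℓ (z j) (θm i) + lam / 2 * ‖θm i‖ ^ 2
        ≤ (1 / (n : ℝ)) * ∑ j ∈ Finset.univ.erase i, ℓ (z j) θ + lam / 2 * ‖θ‖ ^ 2) :
    (1 / (n + 1 : ℝ)) * ∑ i : Fin (n + 1), ℓ (z i) (θm i)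
      ≤ (1 / (n + 1 : ℝ)) * (∑ i : Fin (n + 1), ℓ (z i) θfull)
        + (2 / (lam * (n + 1 : ℝ) ^ 2)) * ∑ i : Fin (n + 1), ρ (z i) ^ 2 := by
  have hloss : ∀ i, ℓ (z i) (θm i) - ℓ (z i) θfull
      ≤ ρ (z i) * ((ρ (z i) + (∑ j ∈ univ.erase i, ρ (z j)) / n) / (n + 1) / lam) := fun i ↦
    (le_of_abs_le (hlip _ _ _)).trans <| mul_le_mul_of_nonneg_left
      (norm_sub_le_of_isMin_regularized_risk_erase (fun j ↦ hρ (z j)) (fun j ↦ hconv (z j))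
        (fun j ↦ hlip (z j)) hn hlam i hfull (hm i)) (hρ _)
  calc (1 / (n + 1 : ℝ)) * ∑ i, ℓ (z i) (θm i)
      = 1 / (n + 1 : ℝ) * ∑ i, ℓ (z i) θfull
        + 1 / (n + 1 : ℝ) * ∑ i, (ℓ (z i) (θm i) - ℓ (z i) θfull) := by
        rw [Finset.sum_sub_distrib]
        ring
    _ ≤ 1 / (n + 1 : ℝ) * ∑ i, ℓ (z i) θfull + 1 / (lam * (n + 1 : ℝ) ^ 2)
        * ∑ i, ρ (z i) * (ρ (z i) + (∑ j ∈ univ.erase i, ρ (z j)) / n) := by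
        rw [Finset.mul_sum (s := univ) (a := 1 / (lam * _)), add_le_add_iff_left, Finset.mul_sum]
        refine Finset.sum_le_sum fun i _ ↦ (mul_le_mul_of_nonneg_left (hloss i)
          (by positivity)).trans_eq ?_
        field_simp
    _ ≤ 1 / (n + 1 : ℝ) * ∑ i, ℓ (z i) θfull + 1 / (lam * (n + 1 : ℝ) ^ 2)
        * (2 * ∑ i, ρ (z i) ^ 2) := by
        gcongr
        exact sum_mul_add_sum_erase_div_le _ (Fintype.card_fin _).le
    _ = _ := by ring
end

section
/- Fix $n\ge 1$, $m\ge 1$, and $\alpha\in[0,1]$. For each $\theta$ in the grid $\Theta_m=\{0,\frac{1}{m},\ldots,1\}$ let $R(\theta)\in[0,1]$ and let $\hat{R}(\theta)$ be the average of $n$ i.i.d. $[0,1]$-valued random variables each with mean $R(\theta)$. Let $\hat\theta=\inf\{\theta\in\Theta_m:\hat{R}(\theta)\le\alpha\}$, where $R(1)=\hat{R}(1)=0$ so $\hat\theta$ is well-defined. Then for every $\epsilon\ge 0$, $\mathbb{P}(R(\hat\theta)>\alpha+\epsilon)\le(m+1)\exp(-2n\epsilon^2)$, and hence $\mathbb{E}[R(\hat\theta)]\le\alpha+\epsilon+(m+1)\exp(-2n\epsilon^2)$.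 -/
/-!
If the selected risk `R(θ̂)` exceeds `α + ε`, then some grid point `θ` with `R(θ) > α + ε`
has empirical risk `R̂(θ) ≤ α`, i.e. its empirical mean undershoots its true mean by at least
`ε`. Hoeffding's inequality bounds each such event by `exp (-2nε²)`, and a union bound over the
`m + 1` grid points gives the tail bound. Since `R ≤ 1`, `R(θ̂) ≤ α + ε + 𝟙{R(θ̂) > α + ε}`,
which turns the tail bound into the bound on the expectation.
-/

open MeasureTheory ProbabilityTheory Real

section
variable {Ω : Type*} [MeasurableSpace Ω] {μ : Measure Ω}

lemma measureReal_sum_le_le_exp_of_mem_Icc_zero_one [IsProbabilityMeasure μ] {ι : Type*}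
    [Fintype ι] {Y : ι → Ω → ℝ} (hindep : iIndepFun Y μ) (hmeas : ∀ i, Measurable (Y i))
    (hbdd : ∀ i ω, Y i ω ∈ Set.Icc (0 : ℝ) 1) {a ε : ℝ} (hε : 0 ≤ ε)
    (hmean : ∀ i, a + ε ≤ μ[Y i]) :
    μ.real {ω | ∑ i, Y i ω ≤ Fintype.card ι * a} ≤ exp (-2 * Fintype.card ι * ε ^ 2) := by
  set N : ℝ := (Fintype.card ι : ℝ) with hNdef
  -- The lower tail of `∑ i, Y i` is the upper tail of the centred variables `μ[Y i] - Y i`.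
  have hindep' : iIndepFun (fun i ω ↦ μ[Y i] - Y i ω) μ :=
    hindep.comp (fun i (x : ℝ) ↦ (∫ ω, Y i ω ∂μ) - x) fun _ ↦ measurable_const.sub measurable_id
  have hsubG : ∀ i ∈ Finset.univ,
      HasSubgaussianMGF (fun ω ↦ μ[Y i] - Y i ω) ((‖(1 : ℝ) - 0‖₊ / 2) ^ 2) μ := by
    intro i _
    refine (hasSubgaussianMGF_of_mem_Icc (hmeas i).aemeasurable (ae_of_all _ (hbdd i))).neg.congr
      (ae_of_all _ fun ω ↦ ?_)
    simp
  have htail := HasSubgaussianMGF.measure_sum_ge_le_of_iIndepFun hindep' hsubG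
    (ε := N * ε) (by positivity)
  have hsub : {ω | ∑ i, Y i ω ≤ N * a} ⊆ {ω | N * ε ≤ ∑ i, (μ[Y i] - Y i ω)} := by
    intro ω hω
    have hsum := Finset.sum_le_sum fun i (_ : i ∈ Finset.univ) ↦ hmean i
    simp only [Finset.sum_const, Finset.card_univ, nsmul_eq_mul, ← hNdef] at hsum
    simp only [Set.mem_ofPred_eq, Finset.sum_sub_distrib] at hω ⊢
    linarith
  refine (measureReal_mono hsub).trans (htail.trans_eq ?_)
  congr 1
  rcases eq_or_ne N 0 with hN | hN
  · simp [hN]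
  · simp only [Finset.sum_const, Finset.card_univ, nsmul_eq_mul, sub_zero, nnnorm_one]
    push_cast
    rw [← hNdef]
    field_simp

lemma measureReal_preimage_le_card_mul [IsFiniteMeasure μ] {ι : Type*} [Fintype ι]
    {khat : Ω → ι} {P : ι → Ω → Prop} (hP : ∀ ω, P (khat ω) ω) {S : Set ι} {b : ℝ}
    (hb0 : 0 ≤ b) (hb : ∀ k ∈ S, μ.real {ω | P k ω} ≤ b) :
    μ.real (khat ⁻¹' S) ≤ Fintype.card ι * b := by
  classical
  have hsub : khat ⁻¹' S ⊆ ⋃ k, {ω | k ∈ S ∧ P k ω} :=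
    fun ω hω ↦ Set.mem_iUnion.2 ⟨khat ω, hω, hP ω⟩
  have hle : ∀ k, μ.real {ω | k ∈ S ∧ P k ω} ≤ b := by
    intro k
    by_cases hk : k ∈ S
    · simpa [hk] using hb k hk
    · simpa [hk] using hb0
  calc μ.real (khat ⁻¹' S) ≤ ∑ k, μ.real {ω | k ∈ S ∧ P k ω} :=
        (measureReal_mono hsub).trans (measureReal_iUnion_fintype_le _)
    _ ≤ ∑ _k : ι, b := Finset.sum_le_sum fun k _ ↦ hle k
    _ = Fintype.card ι * b := by simp

lemma integral_le_add_measureReal_lt [IsProbabilityMeasure μ] {f : Ω → ℝ} (hf : Measurable f)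
    (hf0 : ∀ ω, 0 ≤ f ω) (hf1 : ∀ ω, f ω ≤ 1) {t : ℝ} (ht : 0 ≤ t) :
    ∫ ω, f ω ∂μ ≤ t + μ.real {ω | t < f ω} := by
  set s := {ω | t < f ω}
  have hs : MeasurableSet s := measurableSet_lt measurable_const hf
  have hind : Integrable (s.indicator fun _ ↦ (1 : ℝ)) μ := (integrable_const 1).indicator hs
  have hpt : ∀ ω, f ω ≤ t + s.indicator (fun _ ↦ (1 : ℝ)) ω := by
    intro ω
    by_cases hω : ω ∈ s
    · simp only [Set.indicator_of_mem hω]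
      linarith [hf1 ω]
    · simp only [Set.indicator_of_notMem hω]
      linarith [not_lt.1 (show ¬t < f ω from hω)]
  calc ∫ ω, f ω ∂μ ≤ ∫ ω, (t + s.indicator (fun _ ↦ (1 : ℝ)) ω) ∂μ :=
        integral_mono (Integrable.of_mem_Icc 0 1 hf.aemeasurable
          (ae_of_all _ fun ω ↦ ⟨hf0 ω, hf1 ω⟩)) ((integrable_const t).add hind) hpt
    _ = t + μ.real s := by
        rw [integral_add (integrable_const t) hind, integral_indicator_const _ hs]
        simp

end

theorem grid_risk_control_general
    {Ω : Type*} [MeasurableSpace Ω] (μ : Measure Ω) [IsProbabilityMeasure μ]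
    (n m : ℕ) (hn : 1 ≤ n)
    (α : ℝ) (hα : α ∈ Set.Icc (0 : ℝ) 1)
    (R : Fin (m + 1) → ℝ) (hR : ∀ k, R k ∈ Set.Icc (0 : ℝ) 1)
    (X : Fin (m + 1) → Fin n → Ω → ℝ)
    (hXmeas : ∀ k i, Measurable (X k i))
    (hXbdd : ∀ k i, ∀ ω, X k i ω ∈ Set.Icc (0 : ℝ) 1)
    -- for each grid point, the n variables are independent ...
    (hindep : ∀ k, iIndepFun (X k) μ)
    -- ... with mean R k
    (hmean : ∀ k i, (∫ ω, X k i ω ∂μ) = R k)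
    -- the empirical risk at each grid point is the average of the n variables
    (Rhat : Fin (m + 1) → Ω → ℝ)
    (hRhat : ∀ k ω, Rhat k ω = (1 / (n : ℝ)) * ∑ i : Fin n, X k i ω)
    -- k̂ is the smallest grid index at which the empirical risk is ≤ α
    (khat : Ω → Fin (m + 1)) (hkhatmeas : Measurable khat)
    (hkhat : ∀ ω, Rhat (khat ω) ω ≤ α ∧ ∀ k, Rhat k ω ≤ α → khat ω ≤ k) :
    ∀ ε : ℝ, 0 ≤ ε →
      (μ {ω | α + ε < R (khat ω)}).toReal ≤ (m + 1 : ℝ) * Real.exp (-2 * n * ε ^ 2)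
      ∧ (∫ ω, R (khat ω) ∂μ) ≤ α + ε + (m + 1 : ℝ) * Real.exp (-2 * n * ε ^ 2) := by
  intro ε hε
  have hnpos : (0 : ℝ) < n := by exact_mod_cast hn
  have hgrid : ∀ k, α + ε < R k → μ.real {ω | Rhat k ω ≤ α} ≤ exp (-2 * n * ε ^ 2) := by
    intro k hk
    have hsum : {ω | Rhat k ω ≤ α} ⊆ {ω | ∑ i, X k i ω ≤ n * α} := by
      intro ω hω
      rwa [Set.mem_ofPred_eq, hRhat, one_div, inv_mul_le_iff₀ hnpos] at hω
    have hoeffding := measureReal_sum_le_le_exp_of_mem_Icc_zero_one (hindep k) (hXmeas k)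
      (hXbdd k) hε fun i ↦ (hmean k i).symm ▸ hk.le
    rw [Fintype.card_fin] at hoeffding
    exact (measureReal_mono hsum).trans hoeffding
  have htail : μ.real {ω | α + ε < R (khat ω)} ≤ (m + 1 : ℝ) * exp (-2 * n * ε ^ 2) := by
    simpa using measureReal_preimage_le_card_mul (fun ω ↦ (hkhat ω).1)
      (S := {k | α + ε < R k}) (exp_pos _).le hgrid
  refine ⟨htail, ?_⟩
  calc ∫ ω, R (khat ω) ∂μ ≤ α + ε + μ.real {ω | α + ε < R (khat ω)} :=
        integral_le_add_measureReal_lt (measurable_from_top.comp hkhatmeas)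
          (fun ω ↦ (hR _).1) (fun ω ↦ (hR _).2) (add_nonneg hα.1 hε)
    _ ≤ _ := by linarith

/-- **Risk control on a grid via Hoeffding + union bound** (Proposition 2's core bound).
The grid `Θ_m = {0, 1/m, …, 1}` is indexed by `k : Fin (m+1)` (so `θ = k/m`). For each
grid point, `R̂(θ)` is the average of `n` i.i.d. `[0,1]`-valued random variables with
mean `R(θ)`; `R(1) = R̂(1) = 0`. With `k̂(ω)` the smallest grid index at which
`R̂ ≤ α`, one has `ℙ(R(θ̂) > α + ε) ≤ (m+1) e^{-2nε²}` and hence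
`𝔼[R(θ̂)] ≤ α + ε + (m+1) e^{-2nε²}` for every `ε ≥ 0`. -/
theorem grid_risk_control
    {Ω : Type*} [MeasurableSpace Ω] (μ : Measure Ω) [IsProbabilityMeasure μ]
    (n m : ℕ) (hn : 1 ≤ n) (hm : 1 ≤ m)
    (α : ℝ) (hα : α ∈ Set.Icc (0 : ℝ) 1)
    (R : Fin (m + 1) → ℝ) (hR : ∀ k, R k ∈ Set.Icc (0 : ℝ) 1)
    (X : Fin (m + 1) → Fin n → Ω → ℝ)
    (hXmeas : ∀ k i, Measurable (X k i))
    (hXbdd : ∀ k i, ∀ ω, X k i ω ∈ Set.Icc (0 : ℝ) 1)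
    -- for each grid point, the n variables are independent ...
    (hindep : ∀ k, iIndepFun (X k) μ)
    -- ... identically distributed ...
    (hident : ∀ k i i', Measure.map (X k i) μ = Measure.map (X k i') μ)
    -- ... with mean R k
    (hmean : ∀ k i, (∫ ω, X k i ω ∂μ) = R k)
    -- the empirical risk at each grid point is the average of the n variables
    (Rhat : Fin (m + 1) → Ω → ℝ)
    (hRhat : ∀ k ω, Rhat k ω = (1 / (n : ℝ)) * ∑ i : Fin n, X k i ω)
    -- the safe last grid point: R(1) = R̂(1) = 0
    (hsafeR : R (Fin.last m) = 0)
    (hsafeX : ∀ i ω, X (Fin.last m) i ω = 0)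
    -- k̂ is the smallest grid index at which the empirical risk is ≤ α
    (khat : Ω → Fin (m + 1)) (hkhatmeas : Measurable khat)
    (hkhat : ∀ ω, Rhat (khat ω) ω ≤ α ∧ ∀ k, Rhat k ω ≤ α → khat ω ≤ k) :
    ∀ ε : ℝ, 0 ≤ ε →
      (μ {ω | α + ε < R (khat ω)}).toReal ≤ (m + 1 : ℝ) * Real.exp (-2 * n * ε ^ 2)
      ∧ (∫ ω, R (khat ω) ∂μ) ≤ α + ε + (m + 1 : ℝ) * Real.exp (-2 * n * ε ^ 2) :=
  grid_risk_control_general μ n m hn α hα R hR X hXmeas hXbdd hindep hmean Rhat hRhat khat hkhatmeas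
    hkhat
end
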